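/- Let $r \ge 0$ and $i \ge 1$ be integers, and let $f$ be an arithmetic function such that $A(x) := \sum_{n \le x} f(n) = \sum_{j=0}^{r} c_j (\log x)^j + R(x)$, where for every $\varepsilon > 0$ one has $|R(x)| = O(x^{-1/2+\varepsilon})$. Then the integral $D_i := -i \int_1^{\infty} \frac{(\log t)^{i-1} R(t)}{t}\, dt$ converges, and for every $\varepsilon > 0$, $\sum_{n \le x} f(n)(\log n)^i = \sum_{j=0}^{r} \frac{c_j\, j}{j+i} (\log x)^{j+i} + D_i + O(x^{-1/2+\varepsilon})$. -/

import Mathlib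

/-!
Partial summation against `(log t)^i` gives
`∑_{n ≤ x} f n (log n)^i = (log x)^i A(x) - i ∫_1^x (log t)^(i-1) A(t) / t dt`.
Inserting `A = ∑ c_j (log t)^j + R`, the polynomial part integrates exactly to
`∑ c_j i/(j+i) (log x)^(j+i)`, which together with `(log x)^i ∑ c_j (log x)^j` leaves the main term.
The remainder integrand is `O(t^(-3/2+δ))`, so it is integrable on `[1, ∞)`, and completing
`∫_1^x` to `∫_1^∞` leaves the error `R(x) (log x)^i + i ∫_x^∞ (log t)^(i-1) R(t) / t dt`,
both terms being `O(x^(-1/2+ε))`.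
-/

open Asymptotics Filter Finset MeasureTheory Real Set

theorem isBigO_rpow_rpow_atTop_of_le {a b : ℝ} (h : a ≤ b) :
    (fun x : ℝ => x ^ a) =O[atTop] fun x => x ^ b := by
  refine Eventually.isBigO ?_
  filter_upwards [eventually_ge_atTop 1] with x hx
  rw [norm_of_nonneg (by positivity)]
  exact rpow_le_rpow_of_exponent_le hx h

theorem isBigO_log_pow_rpow_atTop (k : ℕ) {ε : ℝ} (hε : 0 < ε) :
    (fun x => log x ^ k) =O[atTop] fun x => x ^ ε := by
  simpa only [rpow_natCast] using (isLittleO_log_rpow_rpow_atTop (k : ℝ) hε).isBigO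

theorem isBigO_log_pow_mul_div {R : ℝ → ℝ} {a δ : ℝ} (k : ℕ)
    (hR : R =O[atTop] fun t => t ^ a) (hδ : 0 < δ) :
    (fun t => log t ^ k * R t / t) =O[atTop] fun t => t ^ (a + δ - 1) := by
  have hinv : (fun t : ℝ => t⁻¹) =O[atTop] fun t => t ^ (-1 : ℝ) :=
    (isBigO_refl _ _).congr_right fun t => (rpow_neg_one t).symm
  exact (isBigO_log_pow_rpow_atTop k hδ).mul_atTop_rpow_of_isBigO_rpow _ _ _ hR le_rfl
    |>.mul_atTop_rpow_of_isBigO_rpow _ _ _ hinv (by linarith)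

theorem Asymptotics.IsBigO.integral_Ioi_rpow_atTop {E : Type*} [NormedAddCommGroup E]
    [NormedSpace ℝ E] {g : ℝ → E} {s : ℝ} (hg : g =O[atTop] fun t => t ^ s) (hs : s < -1) :
    (fun x => ∫ t in Ioi x, g t) =O[atTop] fun x => x ^ (s + 1) := by
  obtain ⟨C, hC⟩ := hg.bound
  obtain ⟨X, hX⟩ := eventually_atTop.mp hC
  refine IsBigO.of_bound (C / -(s + 1)) ?_
  filter_upwards [eventually_ge_atTop X, eventually_gt_atTop 0] with x hxX hx
  have hbound : ∀ᵐ t ∂volume.restrict (Ioi x), ‖g t‖ ≤ C * t ^ s :=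
    (ae_restrict_iff' measurableSet_Ioi).mpr <| ae_of_all _ fun t ht => by
      simpa only [norm_of_nonneg (rpow_nonneg (hx.trans ht).le s)] using
        hX t (hxX.trans ht.le)
  calc ‖∫ t in Ioi x, g t‖ ≤ ∫ t in Ioi x, C * t ^ s :=
        norm_integral_le_of_norm_le ((integrableOn_Ioi_rpow_of_lt hs hx).const_mul C) hbound
    _ = C / -(s + 1) * ‖x ^ (s + 1)‖ := by
        rw [integral_const_mul, integral_Ioi_rpow_of_lt hs hx,
          norm_of_nonneg (rpow_nonneg hx.le _), div_neg, neg_div]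
        ring

theorem sum_Icc_zero_ite_eq_sum_Icc_one {M : Type*} [AddCommMonoid M] (f : ℕ → M) (N : ℕ) :
    ∑ n ∈ Finset.Icc 0 N, (if n = 0 then 0 else f n) = ∑ n ∈ Finset.Icc 1 N, f n := by
  rw [Finset.Icc_eq_cons_Ioc (Nat.zero_le N), Finset.sum_cons, if_pos rfl, zero_add,
    ← Finset.Icc_add_one_left_eq_Ioc]
  exact Finset.sum_congr rfl fun n hn => if_neg (by grind)

theorem sum_Icc_one_mul_eq_sub_integral_mul {𝕜 : Type*} [RCLike 𝕜] (f : ℕ → 𝕜) {g : ℝ → 𝕜}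
    (x : ℝ) (hg_diff : ∀ t ∈ Set.Icc 1 x, DifferentiableAt ℝ g t)
    (hg_int : IntegrableOn (deriv g) (Set.Icc 1 x)) :
    ∑ n ∈ Finset.Icc 1 ⌊x⌋₊, g n * f n =
      g x * (∑ n ∈ Finset.Icc 1 ⌊x⌋₊, f n) -
        ∫ t in Ioc 1 x, deriv g t * ∑ n ∈ Finset.Icc 1 ⌊t⌋₊, f n := by
  simpa only [sum_Icc_zero_ite_eq_sum_Icc_one, mul_ite, mul_zero] using
    sum_mul_eq_sub_integral_mul₀ (fun n => if n = 0 then 0 else f n) (if_pos rfl) x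
      hg_diff hg_int

theorem sum_Icc_mul_log_pow_eq (f : ℕ → ℝ) (i : ℕ) (x : ℝ) :
    ∑ n ∈ Finset.Icc 1 ⌊x⌋₊, f n * log n ^ i =
      log x ^ i * (∑ n ∈ Finset.Icc 1 ⌊x⌋₊, f n) -
        i * ∫ t in Ioc 1 x, log t ^ (i - 1) * (∑ n ∈ Finset.Icc 1 ⌊t⌋₊, f n) / t := by
  have hne : ∀ t ∈ Set.Icc 1 x, t ≠ 0 := fun _ ht => (one_pos.trans_le ht.1).ne'
  have hderiv : ∀ t ∈ Set.Icc 1 x,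
      HasDerivAt (fun t => log t ^ i) (i * (log t ^ (i - 1) / t)) t := fun t ht =>
    ((hasDerivAt_log (hne t ht)).fun_pow i).congr_deriv (by ring)
  have hint : IntegrableOn (deriv fun t => log t ^ i) (Set.Icc 1 x) := by
    refine ContinuousOn.integrableOn_Icc (f := fun t => i * (log t ^ (i - 1) / t)) ?_
      |>.congr_fun (fun t ht => (hderiv t ht).deriv.symm) measurableSet_Icc
    fun_prop (disch := exact hne)
  rw [← integral_const_mul]
  simp_rw [mul_comm (f _)]
  rw [sum_Icc_one_mul_eq_sub_integral_mul f x (fun t ht => (hderiv t ht).differentiableAt) hint]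
  congr 1
  refine setIntegral_congr_fun measurableSet_Ioc fun t ht => ?_
  rw [(hderiv t (Ioc_subset_Icc_self ht)).deriv]
  ring

theorem intervalIntegrable_log_pow_div (k : ℕ) {x : ℝ} (hx : 0 < x) :
    IntervalIntegrable (fun t => log t ^ k / t) volume 1 x := by
  have hne : ∀ t ∈ uIcc 1 x, t ≠ 0 := fun _ ht => ((lt_min one_pos hx).trans_le ht.1).ne'
  exact ContinuousOn.intervalIntegrable (by fun_prop (disch := exact hne))

theorem integral_log_pow_div (k : ℕ) {x : ℝ} (hx : 0 < x) :
    ∫ t in (1 : ℝ)..x, log t ^ k / t = log x ^ (k + 1) / (k + 1) := by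
  have hderiv : ∀ t ∈ uIcc 1 x,
      HasDerivAt (fun t => log t ^ (k + 1) / (k + 1)) (log t ^ k / t) t := fun t ht => by
    have ht0 : t ≠ 0 := ((lt_min one_pos hx).trans_le ht.1).ne'
    refine (((hasDerivAt_log ht0).fun_pow (k + 1)).div_const ((k : ℝ) + 1)).congr_deriv ?_
    field_simp
    push_cast
    ring
  rw [intervalIntegral.integral_eq_sub_of_hasDerivAt hderiv (intervalIntegrable_log_pow_div k hx)]
  simp

theorem integral_log_pow_mul_sum_div (s : Finset ℕ) (c : ℕ → ℝ) {i : ℕ} (hi : 1 ≤ i) {x : ℝ}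
    (hx : 1 ≤ x) :
    ∫ t in Ioc 1 x, log t ^ (i - 1) * (∑ j ∈ s, c j * log t ^ j) / t =
      ∑ j ∈ s, c j / (j + i) * log x ^ (j + i) := by
  have hsplit : (fun t => log t ^ (i - 1) * (∑ j ∈ s, c j * log t ^ j) / t) =
      fun t => ∑ j ∈ s, c j * (log t ^ (j + i - 1) / t) := by
    funext t
    rw [Finset.mul_sum, Finset.sum_div]
    refine Finset.sum_congr rfl fun j _ => ?_
    rw [show j + i - 1 = j + (i - 1) by omega, pow_add]
    ring
  have hx0 : 0 < x := one_pos.trans_le hx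
  rw [← intervalIntegral.integral_of_le hx, hsplit, intervalIntegral.integral_finsetSum
    fun j _ => (intervalIntegrable_log_pow_div _ hx0).const_mul _]
  refine Finset.sum_congr rfl fun j _ => ?_
  have hji : 1 ≤ j + i := by omega
  rw [intervalIntegral.integral_const_mul, integral_log_pow_div _ hx0, Nat.sub_add_cancel hji,
    Nat.cast_sub hji]
  push_cast
  ring

theorem locallyIntegrableOn_log_pow_mul_div (f : ℕ → ℝ) (k : ℕ) {P R : ℝ → ℝ}
    (hP : ContinuousOn P (Ici 1))
    (hA : ∀ x : ℝ, 1 ≤ x → ∑ n ∈ Finset.Icc 1 ⌊x⌋₊, f n = P x + R x) :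
    LocallyIntegrableOn (fun t => log t ^ k * R t / t) (Ici 1) := by
  have hne : ∀ t ∈ Ici (1 : ℝ), t ≠ 0 := fun _ ht => (one_pos.trans_le ht).ne'
  have hw : ContinuousOn (fun t => log t ^ k / t) (Ici 1) := by fun_prop (disch := exact hne)
  refine ((locallyIntegrableOn_mul_sum_Icc f (m := 1) zero_le_one (hw.locallyIntegrableOn
    measurableSet_Ici)).sub ((hw.mul hP).locallyIntegrableOn measurableSet_Ici)).congr ?_
  refine (ae_restrict_mem measurableSet_Ici).mono fun t ht => ?_
  simp only [Pi.sub_apply, Pi.mul_apply]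
  rw [hA t ht]
  ring

theorem sum_mul_log_pow_sub_mainTerm_eq (s : Finset ℕ) {i : ℕ} (hi : 1 ≤ i) (f : ℕ → ℝ)
    (c : ℕ → ℝ) {R : ℝ → ℝ}
    (hA : ∀ x : ℝ, 1 ≤ x → ∑ n ∈ Finset.Icc 1 ⌊x⌋₊, f n = ∑ j ∈ s, c j * log x ^ j + R x)
    (hint : IntegrableOn (fun t => log t ^ (i - 1) * R t / t) (Ici 1)) {x : ℝ} (hx : 1 ≤ x) :
    ∑ n ∈ Finset.Icc 1 ⌊x⌋₊, f n * log n ^ i -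
        (∑ j ∈ s, c j * j / (j + i) * log x ^ (j + i) +
          -i * ∫ t in Ici 1, log t ^ (i - 1) * R t / t) =
      R x * log x ^ i + i * ∫ t in Ioi x, log t ^ (i - 1) * R t / t := by
  have hne : ∀ t ∈ Icc (1 : ℝ) x, t ≠ 0 := fun _ ht => (one_pos.trans_le ht.1).ne'
  have hsplit : ∫ t in Ioc 1 x, log t ^ (i - 1) * (∑ n ∈ Finset.Icc 1 ⌊t⌋₊, f n) / t =
      (∫ t in Ioc 1 x, log t ^ (i - 1) * (∑ j ∈ s, c j * log t ^ j) / t) +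
        ∫ t in Ioc 1 x, log t ^ (i - 1) * R t / t := by
    have hP : IntegrableOn (fun t => log t ^ (i - 1) * (∑ j ∈ s, c j * log t ^ j) / t)
        (Ioc 1 x) :=
      (ContinuousOn.integrableOn_Icc (by fun_prop (disch := exact hne))).mono_set
        Ioc_subset_Icc_self
    rw [← integral_add hP (hint.mono_set fun t ht => ht.1.le)]
    refine setIntegral_congr_fun measurableSet_Ioc fun t ht => ?_
    rw [hA t ht.1.le]
    ring
  have htail : ∫ t in Ici 1, log t ^ (i - 1) * R t / t =
      (∫ t in Ioc 1 x, log t ^ (i - 1) * R t / t) + ∫ t in Ioi x, log t ^ (i - 1) * R t / t := by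
    rw [integral_Ici_eq_integral_Ioi, ← intervalIntegral.integral_of_le hx,
      ← intervalIntegral.integral_Ioi_sub_Ioi (hint.mono_set Ioi_subset_Ici_self) hx]
    ring
  have hmain : log x ^ i * ∑ j ∈ s, c j * log x ^ j =
      i * ∑ j ∈ s, c j / (j + i) * log x ^ (j + i) +
        ∑ j ∈ s, c j * j / (j + i) * log x ^ (j + i) := by
    rw [Finset.mul_sum, Finset.mul_sum, ← Finset.sum_add_distrib]
    refine Finset.sum_congr rfl fun j _ => ?_
    have : (j : ℝ) + i ≠ 0 := by positivity
    field_simp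
    ring
  rw [sum_Icc_mul_log_pow_eq, hA x hx, hsplit, integral_log_pow_mul_sum_div s c hi hx, htail]
  linear_combination hmain

/-- The key computation inside Lemma 1: if
`A(x) = ∑_{n ≤ x} f n = ∑_{j=0}^r c_j (log x)^j + R(x)` with `R(x) = O(x^{-1/2+ε})` for
every `ε > 0`, then the integral `D_i = -i ∫_1^∞ (log t)^{i-1} R(t)/t dt` converges and
`∑_{n ≤ x} f n (log n)^i = ∑_{j=0}^r (c_j j/(j+i)) (log x)^{j+i} + D_i + O(x^{-1/2+ε})`. -/
theorem sum_mul_log_n_pow_asymptotic (r i : ℕ) (hi : 1 ≤ i) (f : ℕ → ℝ) (c : ℕ → ℝ)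
    (R : ℝ → ℝ)
    (hA : ∀ x : ℝ, 1 ≤ x → (∑ n ∈ Finset.Icc 1 ⌊x⌋₊, f n) =
      (∑ j ∈ Finset.range (r + 1), c j * Real.log x ^ j) + R x)
    (hR : ∀ ε > (0 : ℝ), R =O[atTop] fun x : ℝ => x ^ (-1 / 2 + ε)) :
    MeasureTheory.IntegrableOn (fun t : ℝ => Real.log t ^ (i - 1) * R t / t)
      (Set.Ici (1 : ℝ)) ∧
    ∀ ε > (0 : ℝ),
      (fun x : ℝ => (∑ n ∈ Finset.Icc 1 ⌊x⌋₊, f n * Real.log (n : ℝ) ^ i) -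
          ((∑ j ∈ Finset.range (r + 1),
              c j * (j : ℝ) / ((j : ℝ) + (i : ℝ)) * Real.log x ^ (j + i)) +
            (-(i : ℝ) * ∫ t in Set.Ici (1 : ℝ), Real.log t ^ (i - 1) * R t / t)))
        =O[atTop] fun x : ℝ => x ^ (-1 / 2 + ε) := by
  have hO : ∀ δ : ℝ, 0 < δ → (fun t => log t ^ (i - 1) * R t / t) =O[atTop]
      fun t => t ^ (-1 / 2 + δ / 2 + δ / 2 - 1) := fun δ hδ =>
    isBigO_log_pow_mul_div (i - 1) (hR (δ / 2) (half_pos hδ)) (half_pos hδ)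
  have hP : ContinuousOn (fun x => ∑ j ∈ range (r + 1), c j * log x ^ j) (Ici 1) := by
    have hne : ∀ x ∈ Ici (1 : ℝ), x ≠ 0 := fun _ hx => (one_pos.trans_le hx).ne'
    fun_prop (disch := exact hne)
  have hint : IntegrableOn (fun t => log t ^ (i - 1) * R t / t) (Ici 1) :=
    (locallyIntegrableOn_log_pow_mul_div f (i - 1) hP hA).integrableOn_of_isBigO_atTop
      (hO (1 / 4) (by norm_num)) (integrableAtFilter_rpow_atTop_iff.mpr (by norm_num))
  refine ⟨hint, fun ε hε => ?_⟩
  have hboundary : (fun x => R x * log x ^ i) =O[atTop] fun x => x ^ (-1 / 2 + ε) :=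
    (hR (ε / 2) (half_pos hε)).mul_atTop_rpow_of_isBigO_rpow _ _ _
      (isBigO_log_pow_rpow_atTop i (half_pos hε)) (by linarith)
  obtain ⟨δ, hδ, hδε, hδ_lt⟩ : ∃ δ : ℝ, 0 < δ ∧ δ ≤ ε ∧ δ < 1 / 2 :=
    ⟨min ε (1 / 4), lt_min hε (by norm_num), min_le_left _ _,
      (min_le_right _ _).trans_lt (by norm_num)⟩
  have htail : (fun x => ∫ t in Ioi x, log t ^ (i - 1) * R t / t) =O[atTop]
      fun x => x ^ (-1 / 2 + ε) :=
    ((hO δ hδ).integral_Ioi_rpow_atTop (by linarith)).trans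
      (isBigO_rpow_rpow_atTop_of_le (by linarith))
  refine EventuallyEq.trans_isBigO ?_ (hboundary.add (htail.const_mul_left (i : ℝ)))
  filter_upwards [eventually_ge_atTop 1] with x hx
  exact sum_mul_log_pow_sub_mainTerm_eq (range (r + 1)) hi f c hA hint hx
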